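/- Maximizing the minimum pairwise subgraph distance over selections of k matches, one per partition from k pairwise non-adjacent partitions all at mutual PAG hop distance at least h, guarantees distance diversity at least 2(h−1)d, while no selection of k matches can achieve diversity greater than 2(H+1)d where H is the maximum PAG hop distance between any two partitions; hence choosing matches from the mutually farthest partitions achieves ratio at least (h−1)/(H+1) of the optimum. -/

import Mathlib

/-- Subgraph distance: minimum shortest-path distance over pairs of vertices. -/
noncomputable def subDist {V : Type*} [MetricSpace V] (A B : Finset V) : ℝ :=
  sInf {x : ℝ | ∃ a ∈ A, ∃ b ∈ B, dist a b = x}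

section subDist

variable {V : Type*} [MetricSpace V] {A B : Finset V}

theorem subDist_le_dist {a b : V} (ha : a ∈ A) (hb : b ∈ B) : subDist A B ≤ dist a b :=
  csInf_le ⟨0, by rintro x ⟨u, -, v, -, rfl⟩; exact dist_nonneg⟩ ⟨a, ha, b, hb, rfl⟩

theorem le_subDist {c : ℝ} (hA : A.Nonempty) (hB : B.Nonempty)
    (hc : ∀ a ∈ A, ∀ b ∈ B, c ≤ dist a b) : c ≤ subDist A B := by
  obtain ⟨a, ha⟩ := hA
  obtain ⟨b, hb⟩ := hB
  refine le_csInf ⟨dist a b, a, ha, b, hb, rfl⟩ ?_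
  rintro x ⟨u, hu, v, hv, rfl⟩
  exact hc u hu v hv

end subDist

section envelope

variable {V ι : Type*} [MetricSpace V] {P : ι → Set V} {hop : ι → ι → ℕ} {d : ℝ}
  {A B : Finset V} {i j : ι}

theorem le_subDist_of_le_hop (hd : 0 ≤ d)
    (henvLo : ∀ u ∈ P i, ∀ v ∈ P j, 2 * ((hop i j : ℝ) - 1) * d ≤ dist u v)
    {h : ℕ} (hh : h ≤ hop i j) (hA : (A : Set V) ⊆ P i) (hB : (B : Set V) ⊆ P j)
    (hAne : A.Nonempty) (hBne : B.Nonempty) :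
    2 * ((h : ℝ) - 1) * d ≤ subDist A B := by
  refine le_subDist hAne hBne fun u hu v hv => le_trans ?_ (henvLo u (hA hu) v (hB hv))
  have : (h : ℝ) ≤ hop i j := by exact_mod_cast hh
  gcongr

theorem subDist_le_of_hop_le (hd : 0 ≤ d)
    (henvHi : ∀ u ∈ P i, ∀ v ∈ P j, dist u v ≤ 2 * ((hop i j : ℝ) + 1) * d)
    {H : ℕ} (hH : hop i j ≤ H) (hA : (A : Set V) ⊆ P i) (hB : (B : Set V) ⊆ P j)
    (hAne : A.Nonempty) (hBne : B.Nonempty) :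
    subDist A B ≤ 2 * ((H : ℝ) + 1) * d := by
  obtain ⟨u, hu⟩ := hAne
  obtain ⟨v, hv⟩ := hBne
  refine (subDist_le_dist hu hv).trans ((henvHi u (hA hu) v (hB hv)).trans ?_)
  have : (hop i j : ℝ) ≤ H := by exact_mod_cast hH
  gcongr

end envelope

theorem farthest_partition_selection_ratio_general {V ι : Type*} [MetricSpace V]
    (P : ι → Set V) (hop : ι → ι → ℕ) (d : ℝ) (hd : 0 < d)
    (henvLo : ∀ i j : ι, ∀ u ∈ P i, ∀ v ∈ P j,
      2 * ((hop i j : ℝ) - 1) * d ≤ dist u v)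
    (henvHi : ∀ i j : ι, ∀ u ∈ P i, ∀ v ∈ P j,
      dist u v ≤ 2 * ((hop i j : ℝ) + 1) * d)
    (k : ℕ) (h H : ℕ) (hH : ∀ i j : ι, hop i j ≤ H)
    (s : Fin k → ι)
    (hsep : ∀ a b : Fin k, a ≠ b → h ≤ hop (s a) (s b))
    (M : Fin k → Finset V) (hM : ∀ a, (M a : Set V) ⊆ P (s a))
    (hMne : ∀ a, (M a).Nonempty) :
    (∀ a b : Fin k, a ≠ b → 2 * ((h : ℝ) - 1) * d ≤ subDist (M a) (M b)) ∧
    (∀ (t : Fin k → ι), Function.Injective t →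
      ∀ (N : Fin k → Finset V), (∀ a, (N a : Set V) ⊆ P (t a)) → (∀ a, (N a).Nonempty) →
      ∀ a b : Fin k, a ≠ b → subDist (N a) (N b) ≤ 2 * ((H : ℝ) + 1) * d) ∧
    (∀ a b : Fin k, a ≠ b →
      ((h : ℝ) - 1) / ((H : ℝ) + 1) * (2 * ((H : ℝ) + 1) * d) ≤ subDist (M a) (M b)) := by
  have lower : ∀ a b : Fin k, a ≠ b → 2 * ((h : ℝ) - 1) * d ≤ subDist (M a) (M b) :=
    fun a b hab => le_subDist_of_le_hop hd.le (henvLo _ _) (hsep a b hab) (hM a) (hM b)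
      (hMne a) (hMne b)
  refine ⟨lower, ?_, fun a b hab => ?_⟩
  · intro t _ N hN hNne a b _
    exact subDist_le_of_hop_le hd.le (henvHi _ _) (hH _ _) (hN a) (hN b) (hNne a) (hNne b)
  · have : ((h : ℝ) - 1) / ((H : ℝ) + 1) * (2 * ((H : ℝ) + 1) * d) = 2 * ((h : ℝ) - 1) * d := by
      field_simp
    exact this ▸ lower a b hab

/-- Under the distance envelope (all cross-partition vertex distances for partitions at PAG
hop distance `h'` lie in `[2(h'−1)d, 2(h'+1)d]`, radius `d > 0`), selecting one match per
partition from `k` partitions at mutual hop distance at least `h` guarantees pairwise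
subgraph distance at least `2(h−1)d`; no selection of matches from distinct partitions can
have any pairwise subgraph distance exceeding `2(H+1)d`, where `H` bounds all hop distances;
hence the chosen selection achieves at least a `(h−1)/(H+1)` fraction of the optimum. -/
theorem farthest_partition_selection_ratio {V ι : Type*} [MetricSpace V]
    (P : ι → Set V) (hop : ι → ι → ℕ) (d : ℝ) (hd : 0 < d)
    (henvLo : ∀ i j : ι, ∀ u ∈ P i, ∀ v ∈ P j,
      2 * ((hop i j : ℝ) - 1) * d ≤ dist u v)
    (henvHi : ∀ i j : ι, ∀ u ∈ P i, ∀ v ∈ P j,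
      dist u v ≤ 2 * ((hop i j : ℝ) + 1) * d)
    (k : ℕ) (hk : 2 ≤ k) (h H : ℕ) (hH : ∀ i j : ι, hop i j ≤ H)
    (s : Fin k → ι) (hs : Function.Injective s)
    (hsep : ∀ a b : Fin k, a ≠ b → h ≤ hop (s a) (s b))
    (M : Fin k → Finset V) (hM : ∀ a, (M a : Set V) ⊆ P (s a))
    (hMne : ∀ a, (M a).Nonempty) :
    (∀ a b : Fin k, a ≠ b → 2 * ((h : ℝ) - 1) * d ≤ subDist (M a) (M b)) ∧
    (∀ (t : Fin k → ι), Function.Injective t →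
      ∀ (N : Fin k → Finset V), (∀ a, (N a : Set V) ⊆ P (t a)) → (∀ a, (N a).Nonempty) →
      ∀ a b : Fin k, a ≠ b → subDist (N a) (N b) ≤ 2 * ((H : ℝ) + 1) * d) ∧
    (∀ a b : Fin k, a ≠ b →
      ((h : ℝ) - 1) / ((H : ℝ) + 1) * (2 * ((H : ℝ) + 1) * d) ≤ subDist (M a) (M b)) :=
  farthest_partition_selection_ratio_general P hop d hd henvLo henvHi k h H hH s hsep M hM hMne
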